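/- arXiv:2605.09528 — 4 statements merged into one kernel-verified Lean document; each statement's English description precedes it below -/
import Mathlib

section
/- Part (I) of Theorem 1: Let F be a multi-valued propositional formula of a signature σ such that for every constant c in σ the domain Dom(c) has at least two elements. Then a multi-valued interpretation I of σ is a multi-valued stable model of F if and only if I^prop is a propositional stable model of the conjunction F^prop ∧ UEC_σ. -/
/-! Core definitions: multi-valued propositional formulas under the stable model
semantics (Bartholomew–Lee), propositional formulas under the stable model
semantics (Ferraris), and the translation between them. -/

/-- Multi-valued propositional formulas over constants `σ` and values `V`.
`¬F` abbreviates `F → ⊥`, and `G ← F` denotes `F → G`. -/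
inductive MVF (σ V : Type) : Type where
  | bot : MVF σ V
  | atom : σ → V → MVF σ V
  | and : MVF σ V → MVF σ V → MVF σ V
  | or : MVF σ V → MVF σ V → MVF σ V
  | imp : MVF σ V → MVF σ V → MVF σ V
  deriving DecidableEq

namespace MVF

variable {σ V : Type}

/-- `¬F` is `F → ⊥`. -/
def neg (F : MVF σ V) : MVF σ V := .imp F .bot

/-- Classical satisfaction of a multi-valued formula by `I : σ → V`. -/
def sat (I : σ → V) : MVF σ V → Prop
  | .bot => False
  | .atom c v => I c = v
  | .and F G => F.sat I ∧ G.sat I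
  | .or F G => F.sat I ∨ G.sat I
  | .imp F G => F.sat I → G.sat I

open Classical in
/-- The reduct `F^I`: replace each maximal subformula not satisfied by `I` with `⊥`. -/
noncomputable def reduct (I : σ → V) : MVF σ V → MVF σ V
  | .bot => .bot
  | .atom c v => if I c = v then .atom c v else .bot
  | .and F G => if (MVF.and F G).sat I then .and (F.reduct I) (G.reduct I) else .bot
  | .or F G => if (MVF.or F G).sat I then .or (F.reduct I) (G.reduct I) else .bot
  | .imp F G => if (MVF.imp F G).sat I then .imp (F.reduct I) (G.reduct I) else .bot

/-- A formula is a formula *of the signature* `Dom` when every atom `c=v`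
occurring in it satisfies `v ∈ Dom c`. -/
def wf (Dom : σ → Finset V) : MVF σ V → Prop
  | .bot => True
  | .atom c v => v ∈ Dom c
  | .and F G => F.wf Dom ∧ G.wf Dom
  | .or F G => F.wf Dom ∧ G.wf Dom
  | .imp F G => F.wf Dom ∧ G.wf Dom

/-- The set of constants occurring in a formula. -/
def consts : MVF σ V → Set σ
  | .bot => ∅
  | .atom c _ => {c}
  | .and F G => F.consts ∪ G.consts
  | .or F G => F.consts ∪ G.consts
  | .imp F G => F.consts ∪ G.consts

end MVF

/-- `I` is a multi-valued interpretation of the signature whose domains are given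
by `Dom` (it maps every constant into its domain). -/
def isInterp {σ V : Type} (Dom : σ → Finset V) (I : σ → V) : Prop := ∀ c, I c ∈ Dom c

/-- `I` is a multi-valued stable model of `F`: `I` is the unique multi-valued
interpretation of the signature satisfying the reduct `F^I`. -/
def isMVStable {σ V : Type} (Dom : σ → Finset V) (F : MVF σ V) (I : σ → V) : Prop :=
  isInterp Dom I ∧ (F.reduct I).sat I ∧
    ∀ J : σ → V, isInterp Dom J → (F.reduct I).sat J → J = I

/-- Stable models of a set of multi-valued formulas (a finite set of formulas
is identified with the conjunction of its members). -/
def isMVStableSet {σ V : Type} (Dom : σ → Finset V) (Γ : Set (MVF σ V)) (I : σ → V) : Prop :=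
  isInterp Dom I ∧ (∀ F ∈ Γ, (F.reduct I).sat I) ∧
    ∀ J : σ → V, isInterp Dom J → (∀ F ∈ Γ, (F.reduct I).sat J) → J = I

/-- Propositional formulas over a set `A` of propositional atoms. -/
inductive PF (A : Type) : Type where
  | bot : PF A
  | atom : A → PF A
  | and : PF A → PF A → PF A
  | or : PF A → PF A → PF A
  | imp : PF A → PF A → PF A
  deriving DecidableEq

namespace PF

variable {A : Type}

/-- `¬F` is `F → ⊥`. -/
def neg (F : PF A) : PF A := .imp F .bot

/-- Classical satisfaction of a propositional formula by `J : A → Prop`. -/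
def sat (J : A → Prop) : PF A → Prop
  | .bot => False
  | .atom a => J a
  | .and F G => F.sat J ∧ G.sat J
  | .or F G => F.sat J ∨ G.sat J
  | .imp F G => F.sat J → G.sat J

open Classical in
/-- The reduct `F^J`: replace each maximal subformula not satisfied by `J` with `⊥`. -/
noncomputable def reduct (J : A → Prop) : PF A → PF A
  | .bot => .bot
  | .atom a => if J a then .atom a else .bot
  | .and F G => if (PF.and F G).sat J then .and (F.reduct J) (G.reduct J) else .bot
  | .or F G => if (PF.or F G).sat J then .or (F.reduct J) (G.reduct J) else .bot
  | .imp F G => if (PF.imp F G).sat J then .imp (F.reduct J) (G.reduct J) else .bot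

end PF

/-- `J` is a propositional stable model of `F`: `J` satisfies the reduct `F^J` and is
minimal, with respect to the set of atoms it makes true, among the interpretations
satisfying `F^J`. -/
def isPStable {A : Type} (F : PF A) (J : A → Prop) : Prop :=
  (F.reduct J).sat J ∧
    ∀ K : A → Prop, (F.reduct J).sat K → (∀ a, K a → J a) → ∀ a, J a ↔ K a

/-- Propositional stable models of a set of propositional formulas (identified
with the conjunction of its members). -/
def isPStableSet {A : Type} (Γ : Set (PF A)) (J : A → Prop) : Prop :=
  (∀ F ∈ Γ, (F.reduct J).sat J) ∧
    ∀ K : A → Prop, (∀ F ∈ Γ, (F.reduct J).sat K) → (∀ a, K a → J a) → ∀ a, J a ↔ K a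

/-- The atoms of the propositional signature `σ^prop`: expressions `c(v)` for a
constant `c` and a value `v ∈ Dom c`. -/
abbrev PAtom {σ V : Type} (Dom : σ → Finset V) : Type := {p : σ × V // p.2 ∈ Dom p.1}

/-- The translation `F^prop`, replacing each multi-valued atom `c=v` by the
propositional atom `c(v)`. -/
def MVF.toProp {σ V : Type} [DecidableEq V] (Dom : σ → Finset V) :
    MVF σ V → PF (PAtom Dom)
  | .bot => .bot
  | .atom c v => if h : v ∈ Dom c then .atom ⟨(c, v), h⟩ else .bot
  | .and F G => .and (F.toProp Dom) (G.toProp Dom)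
  | .or F G => .or (F.toProp Dom) (G.toProp Dom)
  | .imp F G => .imp (F.toProp Dom) (G.toProp Dom)

/-- The translation `I^prop` of a multi-valued interpretation: it makes the
propositional atom `c(v)` true iff `I(c) = v`. -/
def toPropInterp {σ V : Type} (Dom : σ → Finset V) (I : σ → V) : PAtom Dom → Prop :=
  fun p => I p.1.1 = p.1.2

/-- Conjunction of a list of propositional formulas. -/
def listConj {A : Type} : List (PF A) → PF A
  | [] => .imp .bot .bot
  | F :: Fs => .and F (listConj Fs)

/-- Disjunction of a list of propositional formulas. -/
def listDisj {A : Type} : List (PF A) → PF A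
  | [] => .bot
  | F :: Fs => .or F (listDisj Fs)

/-- The existence and uniqueness constraint `UEC(c)`: the conjunction of
`⊥ ← c(v) ∧ c(v')` for all distinct `v, v' ∈ Dom c` together with
`⊥ ← ¬⋁_{v ∈ Dom c} c(v)`. -/
noncomputable def UECc {σ V : Type} [DecidableEq V] (Dom : σ → Finset V) (c : σ) : PF (PAtom Dom) :=
  .and
    (listConj ((Dom c).attach.toList.flatMap fun v =>
      (Dom c).attach.toList.filterMap fun w =>
        if v.1 = w.1 then none
        else some (.imp (.and (.atom ⟨(c, v.1), v.2⟩) (.atom ⟨(c, w.1), w.2⟩)) .bot)))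
    (.imp (PF.neg (listDisj ((Dom c).attach.toList.map fun v =>
      PF.atom ⟨(c, v.1), v.2⟩))) .bot)

/-- `UEC_σ`: the conjunction of `UEC(c)` over all constants `c` of the signature. -/
noncomputable def UECsig {σ V : Type} [Fintype σ] [DecidableEq V] (Dom : σ → Finset V) :
    PF (PAtom Dom) :=
  listConj ((Finset.univ : Finset σ).toList.map (UECc Dom))

section Aux

variable {σ V : Type}

open Classical in
lemma mv_reduct_bot (I : σ → V) : (MVF.bot : MVF σ V).reduct I = .bot := rfl
open Classical in
lemma mv_reduct_atom (I : σ → V) (c : σ) (v : V) :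
    (MVF.atom c v).reduct I = if I c = v then .atom c v else .bot := rfl
open Classical in
lemma mv_reduct_and (I : σ → V) (F G : MVF σ V) :
    (MVF.and F G).reduct I =
      if (MVF.and F G).sat I then .and (F.reduct I) (G.reduct I) else .bot := rfl
open Classical in
lemma mv_reduct_or (I : σ → V) (F G : MVF σ V) :
    (MVF.or F G).reduct I =
      if (MVF.or F G).sat I then .or (F.reduct I) (G.reduct I) else .bot := rfl
open Classical in
lemma mv_reduct_imp (I : σ → V) (F G : MVF σ V) :
    (MVF.imp F G).reduct I =
      if (MVF.imp F G).sat I then .imp (F.reduct I) (G.reduct I) else .bot := rfl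

open Classical in
lemma pf_reduct_bot {A : Type} (J : A → Prop) : (PF.bot : PF A).reduct J = .bot := rfl
open Classical in
lemma pf_reduct_atom {A : Type} (J : A → Prop) (a : A) :
    (PF.atom a).reduct J = if J a then .atom a else .bot := rfl
open Classical in
lemma pf_reduct_and {A : Type} (J : A → Prop) (F G : PF A) :
    (PF.and F G).reduct J =
      if (PF.and F G).sat J then .and (F.reduct J) (G.reduct J) else .bot := rfl
open Classical in
lemma pf_reduct_or {A : Type} (J : A → Prop) (F G : PF A) :
    (PF.or F G).reduct J =
      if (PF.or F G).sat J then .or (F.reduct J) (G.reduct J) else .bot := rfl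
open Classical in
lemma pf_reduct_imp {A : Type} (J : A → Prop) (F G : PF A) :
    (PF.imp F G).reduct J =
      if (PF.imp F G).sat J then .imp (F.reduct J) (G.reduct J) else .bot := rfl

/-- `I` satisfies its own reduct iff it satisfies the formula. -/
lemma mv_sat_reduct_self (I : σ → V) : ∀ F : MVF σ V, (F.reduct I).sat I ↔ F.sat I := by
  intro F
  induction F with
  | bot => simp [mv_reduct_bot]
  | atom c v => by_cases h : I c = v <;> simp [mv_reduct_atom, MVF.sat, h]
  | and F G ihF ihG =>
      by_cases h : (MVF.and F G).sat I
      · rw [mv_reduct_and, if_pos h]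
        show (F.reduct I).sat I ∧ (G.reduct I).sat I ↔ F.sat I ∧ G.sat I
        rw [ihF, ihG]
      · rw [mv_reduct_and, if_neg h]
        exact iff_of_false (fun hx => hx) h
  | or F G ihF ihG =>
      by_cases h : (MVF.or F G).sat I
      · rw [mv_reduct_or, if_pos h]
        show (F.reduct I).sat I ∨ (G.reduct I).sat I ↔ F.sat I ∨ G.sat I
        rw [ihF, ihG]
      · rw [mv_reduct_or, if_neg h]
        exact iff_of_false (fun hx => hx) h
  | imp F G ihF ihG =>
      by_cases h : (MVF.imp F G).sat I
      · rw [mv_reduct_imp, if_pos h]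
        show ((F.reduct I).sat I → (G.reduct I).sat I) ↔ (F.sat I → G.sat I)
        rw [ihF, ihG]
      · rw [mv_reduct_imp, if_neg h]
        exact iff_of_false (fun hx => hx) h

lemma pf_sat_reduct_self {A : Type} (J : A → Prop) :
    ∀ F : PF A, (F.reduct J).sat J ↔ F.sat J := by
  intro F
  induction F with
  | bot => simp [pf_reduct_bot]
  | atom a => by_cases h : J a <;> simp [pf_reduct_atom, PF.sat, h]
  | and F G ihF ihG =>
      by_cases h : (PF.and F G).sat J
      · rw [pf_reduct_and, if_pos h]
        show (F.reduct J).sat J ∧ (G.reduct J).sat J ↔ F.sat J ∧ G.sat J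
        rw [ihF, ihG]
      · rw [pf_reduct_and, if_neg h]
        exact iff_of_false (fun hx => hx) h
  | or F G ihF ihG =>
      by_cases h : (PF.or F G).sat J
      · rw [pf_reduct_or, if_pos h]
        show (F.reduct J).sat J ∨ (G.reduct J).sat J ↔ F.sat J ∨ G.sat J
        rw [ihF, ihG]
      · rw [pf_reduct_or, if_neg h]
        exact iff_of_false (fun hx => hx) h
  | imp F G ihF ihG =>
      by_cases h : (PF.imp F G).sat J
      · rw [pf_reduct_imp, if_pos h]
        show ((F.reduct J).sat J → (G.reduct J).sat J) ↔ (F.sat J → G.sat J)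
        rw [ihF, ihG]
      · rw [pf_reduct_imp, if_neg h]
        exact iff_of_false (fun hx => hx) h

/-- Satisfaction is preserved by the translation to propositional formulas. -/
lemma sat_toProp [DecidableEq V] (Dom : σ → Finset V) (I : σ → V) :
    ∀ F : MVF σ V, F.wf Dom →
      (((F.toProp Dom).sat (toPropInterp Dom I)) ↔ F.sat I) := by
  intro F
  induction F with
  | bot => simp [MVF.toProp, MVF.sat, PF.sat]
  | atom c v =>
      intro h
      simp only [MVF.wf] at h
      simp [MVF.toProp, h, PF.sat, MVF.sat, toPropInterp]
  | and F G ihF ihG =>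
      intro h
      exact and_congr (ihF h.1) (ihG h.2)
  | or F G ihF ihG =>
      intro h
      exact or_congr (ihF h.1) (ihG h.2)
  | imp F G ihF ihG =>
      intro h
      exact imp_congr (ihF h.1) (ihG h.2)

/-- The reduct commutes with the translation to propositional formulas. -/
lemma reduct_toProp [DecidableEq V] (Dom : σ → Finset V) (I : σ → V) :
    ∀ F : MVF σ V, F.wf Dom →
      (F.toProp Dom).reduct (toPropInterp Dom I) = (F.reduct I).toProp Dom := by
  intro F
  induction F with
  | bot => simp [MVF.toProp, mv_reduct_bot, pf_reduct_bot]
  | atom c v =>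
      intro h
      simp only [MVF.wf] at h
      by_cases h2 : I c = v <;>
        simp [MVF.toProp, mv_reduct_atom, pf_reduct_atom, h, h2, toPropInterp]
  | and F G ihF ihG =>
      intro h
      have hs := sat_toProp Dom I (MVF.and F G) h
      rw [MVF.toProp, pf_reduct_and, mv_reduct_and]
      by_cases h2 : (MVF.and F G).sat I
      · rw [if_pos h2, if_pos]
        · rw [MVF.toProp, ihF h.1, ihG h.2]
        · rw [MVF.toProp] at hs; exact hs.mpr h2
      · rw [if_neg h2, if_neg]
        · rfl
        · rw [MVF.toProp] at hs; exact fun hx => h2 (hs.mp hx)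
  | or F G ihF ihG =>
      intro h
      have hs := sat_toProp Dom I (MVF.or F G) h
      rw [MVF.toProp, pf_reduct_or, mv_reduct_or]
      by_cases h2 : (MVF.or F G).sat I
      · rw [if_pos h2, if_pos]
        · rw [MVF.toProp, ihF h.1, ihG h.2]
        · rw [MVF.toProp] at hs; exact hs.mpr h2
      · rw [if_neg h2, if_neg]
        · rfl
        · rw [MVF.toProp] at hs; exact fun hx => h2 (hs.mp hx)
  | imp F G ihF ihG =>
      intro h
      have hs := sat_toProp Dom I (MVF.imp F G) h
      rw [MVF.toProp, pf_reduct_imp, mv_reduct_imp]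
      by_cases h2 : (MVF.imp F G).sat I
      · rw [if_pos h2, if_pos]
        · rw [MVF.toProp, ihF h.1, ihG h.2]
        · rw [MVF.toProp] at hs; exact hs.mpr h2
      · rw [if_neg h2, if_neg]
        · rfl
        · rw [MVF.toProp] at hs; exact fun hx => h2 (hs.mp hx)

/-- Key correspondence between MV interpretations `J` and propositional
interpretations `K` that agree about the atoms of `I`. -/
lemma sat_reduct_corr [DecidableEq V] (Dom : σ → Finset V) (I J : σ → V)
    (hI : isInterp Dom I) (K : PAtom Dom → Prop)
    (hJK : ∀ c, (J c = I c ↔ K ⟨(c, I c), hI c⟩)) :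
    ∀ F : MVF σ V, ((F.reduct I).sat J ↔ ((F.reduct I).toProp Dom).sat K) := by
  intro F
  induction F with
  | bot => simp [mv_reduct_bot, MVF.toProp, MVF.sat, PF.sat]
  | atom c v =>
      by_cases h : I c = v
      · subst h
        rw [mv_reduct_atom, if_pos rfl]
        simpa [MVF.toProp, MVF.sat, PF.sat, hI c] using hJK c
      · rw [mv_reduct_atom, if_neg h]
        simp [MVF.toProp, MVF.sat, PF.sat]
  | and F G ihF ihG =>
      by_cases h : (MVF.and F G).sat I
      · rw [mv_reduct_and, if_pos h]
        exact and_congr ihF ihG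
      · rw [mv_reduct_and, if_neg h]
        simp [MVF.toProp, MVF.sat, PF.sat]
  | or F G ihF ihG =>
      by_cases h : (MVF.or F G).sat I
      · rw [mv_reduct_or, if_pos h]
        exact or_congr ihF ihG
      · rw [mv_reduct_or, if_neg h]
        simp [MVF.toProp, MVF.sat, PF.sat]
  | imp F G ihF ihG =>
      by_cases h : (MVF.imp F G).sat I
      · rw [mv_reduct_imp, if_pos h]
        exact imp_congr ihF ihG
      · rw [mv_reduct_imp, if_neg h]
        simp [MVF.toProp, MVF.sat, PF.sat]

lemma sat_listDisj {A : Type} (J : A → Prop) {L : List (PF A)} {G : PF A}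
    (hG : G ∈ L) (h : G.sat J) : (listDisj L).sat J := by
  induction L with
  | nil => simp at hG
  | cons H L ih =>
      rcases List.mem_cons.mp hG with rfl | hG
      · exact Or.inl h
      · exact Or.inr (ih hG)

lemma listConj_reduct_triv {A : Type} (J : A → Prop) (L : List (PF A))
    (h : ∀ G ∈ L, ∀ K : A → Prop, ((G.reduct J).sat K)) :
    ∀ K : A → Prop, ((listConj L).sat J) ∧ (((listConj L).reduct J).sat K) := by
  induction L with
  | nil =>
      intro K
      refine ⟨fun hx => hx, ?_⟩
      have hs : (PF.imp PF.bot PF.bot).sat J := fun hx => hx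
      rw [listConj, pf_reduct_imp, if_pos hs, pf_reduct_bot]
      exact fun hx => hx
  | cons G L ih =>
      intro K
      have hG : ∀ K : A → Prop, ((G.reduct J).sat K) := h G (by simp)
      have ih' := ih (fun G' hG' => h G' (by simp [hG']))
      have hsG : G.sat J := (pf_sat_reduct_self J G).mp (hG J)
      have hs : (PF.and G (listConj L)).sat J := ⟨hsG, (ih' J).1⟩
      refine ⟨hs, ?_⟩
      rw [listConj, pf_reduct_and, if_pos hs]
      exact ⟨hG K, (ih' K).2⟩

lemma UECc_reduct_triv [DecidableEq V] (Dom : σ → Finset V) (I : σ → V)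
    (hI : isInterp Dom I) (c : σ) :
    ∀ K : PAtom Dom → Prop, ((UECc Dom c).reduct (toPropInterp Dom I)).sat K := by
  intro K
  set J := toPropInterp Dom I with hJdef
  -- uniqueness constraints
  have hA := listConj_reduct_triv J
    ((Dom c).attach.toList.flatMap fun v =>
      (Dom c).attach.toList.filterMap fun w =>
        if v.1 = w.1 then none
        else some (.imp (.and (.atom ⟨(c, v.1), v.2⟩) (.atom ⟨(c, w.1), w.2⟩)) .bot))
    (by
      intro G hG K'
      rcases List.mem_flatMap.mp hG with ⟨v, _, hv2⟩
      rcases List.mem_filterMap.mp hv2 with ⟨w, _, hw2⟩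
      by_cases hvw : v.1 = w.1
      · simp [hvw] at hw2
      · simp only [hvw, if_false, Option.some.injEq] at hw2
        subst hw2
        have hns : ¬ (PF.and (PF.atom ⟨(c, v.1), v.2⟩)
            (PF.atom ⟨(c, w.1), w.2⟩)).sat J := by
          rintro ⟨h1, h2⟩
          exact hvw ((h1 : I c = v.1).symm.trans (h2 : I c = w.1))
        have hs : (PF.imp (PF.and (PF.atom ⟨(c, v.1), v.2⟩)
            (PF.atom ⟨(c, w.1), w.2⟩)) PF.bot).sat J := fun h => absurd h hns
        rw [pf_reduct_imp, if_pos hs, pf_reduct_and, if_neg hns, pf_reduct_bot]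
        exact fun hx => hx)
  -- existence constraint
  have hDsat : (listDisj ((Dom c).attach.toList.map fun v =>
      PF.atom (⟨(c, v.1), v.2⟩ : PAtom Dom))).sat J := by
    apply sat_listDisj J (G := PF.atom ⟨(c, I c), hI c⟩)
    · exact List.mem_map.mpr ⟨⟨I c, hI c⟩,
        Finset.mem_toList.mpr (Finset.mem_attach _ _), rfl⟩
    · exact rfl
  have hnneg : ¬ (PF.imp (listDisj ((Dom c).attach.toList.map fun v =>
      PF.atom (⟨(c, v.1), v.2⟩ : PAtom Dom))) PF.bot).sat J := by
    intro h
    exact h hDsat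
  have hBsat : (PF.imp (PF.neg (listDisj ((Dom c).attach.toList.map fun v =>
      PF.atom (⟨(c, v.1), v.2⟩ : PAtom Dom)))) PF.bot).sat J :=
    fun h => absurd h hnneg
  have hB : ∀ K : PAtom Dom → Prop,
      ((PF.imp (PF.neg (listDisj ((Dom c).attach.toList.map fun v =>
      PF.atom (⟨(c, v.1), v.2⟩ : PAtom Dom)))) PF.bot).reduct J).sat K := by
    intro K'
    rw [pf_reduct_imp, if_pos hBsat]
    rw [show (PF.neg (listDisj ((Dom c).attach.toList.map fun v =>
        PF.atom (⟨(c, v.1), v.2⟩ : PAtom Dom)))).reduct J = PF.bot from by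
      rw [PF.neg, pf_reduct_imp, if_neg hnneg]]
    exact fun hx => hx
  have hs : (UECc Dom c).sat J := ⟨(hA J).1, hBsat⟩
  rw [UECc] at hs ⊢
  rw [pf_reduct_and, if_pos hs]
  exact ⟨(hA K).2, hB K⟩

lemma UECsig_reduct_triv [Fintype σ] [DecidableEq V] (Dom : σ → Finset V) (I : σ → V)
    (hI : isInterp Dom I) :
    ∀ K : PAtom Dom → Prop, ((UECsig Dom).sat (toPropInterp Dom I)) ∧
      (((UECsig Dom).reduct (toPropInterp Dom I)).sat K) := by
  apply listConj_reduct_triv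
  intro G hG
  rcases List.mem_map.mp hG with ⟨c, _, rfl⟩
  exact UECc_reduct_triv Dom I hI c

end Aux

/-- **Theorem 1, Part (I)**: Let `F` be a multi-valued propositional formula of a
signature `σ` such that every constant's domain has at least two elements. A
multi-valued interpretation `I` of `σ` is a multi-valued stable model of `F`
iff `I^prop` is a propositional stable model of `F^prop ∧ UEC_σ`. -/
theorem theorem1_part_I {σ V : Type} [Fintype σ] [DecidableEq V]
    (Dom : σ → Finset V) (hdom : ∀ c : σ, 2 ≤ (Dom c).card)
    (F : MVF σ V) (hF : F.wf Dom)
    (I : σ → V) (hI : isInterp Dom I) :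
    isMVStable Dom F I ↔
      isPStable (PF.and (F.toProp Dom) (UECsig Dom)) (toPropInterp Dom I) := by
  classical
  set J₀ := toPropInterp Dom I with hJ₀def
  have hU := UECsig_reduct_triv Dom I hI
  -- choose, for every constant, a witness value different from `I c`
  have hex : ∀ c, ∃ w ∈ Dom c, w ≠ I c := fun c =>
    Finset.exists_mem_ne (lt_of_lt_of_le one_lt_two (hdom c)) (I c)
  choose w hw hwne using hex
  constructor
  · rintro ⟨_, h2, h3⟩
    have hsatF : F.sat I := (mv_sat_reduct_self I F).mp h2
    have hsatFp : (F.toProp Dom).sat J₀ := (sat_toProp Dom I F hF).mpr hsatF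
    have hsAnd : (PF.and (F.toProp Dom) (UECsig Dom)).sat J₀ := ⟨hsatFp, (hU J₀).1⟩
    have hred : (PF.and (F.toProp Dom) (UECsig Dom)).reduct J₀ =
        PF.and ((F.toProp Dom).reduct J₀) ((UECsig Dom).reduct J₀) := by
      rw [pf_reduct_and, if_pos hsAnd]
    constructor
    · rw [hred]
      refine ⟨?_, (hU J₀).2⟩
      rw [hJ₀def, reduct_toProp Dom I F hF]
      exact (sat_reduct_corr Dom I I hI J₀ (fun c => Iff.rfl) F).mp h2
    · intro K hK hsub
      rw [hred] at hK
      have hKF : (((F.reduct I).toProp Dom)).sat K := by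
        have := hK.1
        rwa [hJ₀def, reduct_toProp Dom I F hF] at this
      -- build a multi-valued interpretation from K
      set J : σ → V := fun c => if K ⟨(c, I c), hI c⟩ then I c else w c with hJdef
      have hJint : isInterp Dom J := by
        intro c
        by_cases hc : K ⟨(c, I c), hI c⟩ <;> simp [hJdef, hc, hI c, hw c]
      have hJK : ∀ c, (J c = I c ↔ K ⟨(c, I c), hI c⟩) := by
        intro c
        by_cases hc : K ⟨(c, I c), hI c⟩ <;> simp [hJdef, hc, hwne c]
      have hsatJ : (F.reduct I).sat J :=
        (sat_reduct_corr Dom I J hI K hJK F).mpr hKF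
      have hJI : J = I := h3 J hJint hsatJ
      have hKall : ∀ c, K ⟨(c, I c), hI c⟩ := by
        intro c
        exact (hJK c).mp (by rw [hJI])
      rintro ⟨⟨c, v⟩, hv⟩
      constructor
      · intro hJv
        have hvI : I c = v := hJv
        subst hvI
        exact hKall c
      · intro hKv
        exact hsub _ hKv
  · rintro ⟨hs, hmin⟩
    -- the conjunction is classically satisfied by J₀
    have hsAnd : (PF.and (F.toProp Dom) (UECsig Dom)).sat J₀ :=
      (pf_sat_reduct_self J₀ _).mp hs
    have hred : (PF.and (F.toProp Dom) (UECsig Dom)).reduct J₀ =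
        PF.and ((F.toProp Dom).reduct J₀) ((UECsig Dom).reduct J₀) := by
      rw [pf_reduct_and, if_pos hsAnd]
    rw [hred] at hs
    have hsF : ((F.reduct I).toProp Dom).sat J₀ := by
      have := hs.1
      rwa [hJ₀def, reduct_toProp Dom I F hF] at this
    have hsatI : (F.reduct I).sat I :=
      (sat_reduct_corr Dom I I hI J₀ (fun c => Iff.rfl) F).mpr hsF
    refine ⟨hI, hsatI, ?_⟩
    intro J hJint hsatJ
    -- the propositional interpretation induced by J (restricted below J₀)
    set K : PAtom Dom → Prop := fun a => J a.1.1 = a.1.2 ∧ I a.1.1 = a.1.2 with hKdef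
    have hJK : ∀ c, (J c = I c ↔ K ⟨(c, I c), hI c⟩) := by
      intro c
      simp [hKdef]
    have hKF : ((F.reduct I).toProp Dom).sat K :=
      (sat_reduct_corr Dom I J hI K hJK F).mp hsatJ
    have hKred : ((PF.and (F.toProp Dom) (UECsig Dom)).reduct J₀).sat K := by
      rw [hred]
      refine ⟨?_, (hU K).2⟩
      rwa [hJ₀def, reduct_toProp Dom I F hF]
    have hsub : ∀ a, K a → J₀ a := fun a ha => ha.2
    have hiff := hmin K hKred hsub
    funext c
    have := (hiff ⟨(c, I c), hI c⟩).mp rfl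
    exact this.1
end

section
/- Part (II) of Theorem 1: Let F be a multi-valued propositional formula of a signature σ such that for every constant c in σ the domain Dom(c) has at least two elements. Then a propositional interpretation J of σ^prop is a propositional stable model of F^prop ∧ UEC_σ if and only if J = I^prop for some multi-valued stable model I of F. -/
/-! The models of `UEC_σ` are exactly the interpretations `I^prop`, and `UEC_σ` is a
conjunction of constraints `⊥ ← P`, whose reducts are satisfied by every interpretation.
Moreover the reduct of `F^prop` with respect to `I^prop` is `(F^I)^prop`, and every atom
of `F^I` is true in `I`. Hence a subset `K` of `I^prop` satisfying the reduct of
`F^prop ∧ UEC_σ` corresponds to the multi-valued interpretation that keeps `I(c)` where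
`c(I c) ∈ K` and moves `c` to some other value of `Dom c` otherwise (this needs
`|Dom c| ≥ 2`); conversely an interpretation `I'` satisfying `F^I` yields
`K = I^prop ∩ I'^prop`. Minimality of `I^prop` and uniqueness of `I` thus match. -/

namespace PF

variable {A : Type} {J K : A → Prop}

theorem sat_reduct_self_iff (G : PF A) : (G.reduct J).sat J ↔ G.sat J := by
  induction G with
  | bot => rfl
  | atom a => by_cases h : J a <;> simp [reduct, sat, h]
  | and F G ihF ihG | or F G ihF ihG | imp F G ihF ihG =>
    rw [reduct]
    split_ifs with h
    · simp only [sat, ihF, ihG]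
    · exact iff_of_false id h

theorem reduct_of_not_sat {G : PF A} (h : ¬G.sat J) : G.reduct J = .bot := by
  cases G <;> first | rfl | exact if_neg h

theorem reduct_and_of_sat {F G : PF A} (h : (F.and G).sat J) :
    (F.and G).reduct J = (F.reduct J).and (G.reduct J) :=
  if_pos h

theorem sat_reduct_imp_bot {P : PF A} (h : (P.imp .bot).sat J) :
    ((P.imp .bot).reduct J).sat K := by
  rw [reduct, if_pos h, reduct_of_not_sat h]
  exact id

end PF

section Constraints

variable {A : Type} {J K : A → Prop}

theorem sat_listConj_iff {L : List (PF A)} : (listConj L).sat J ↔ ∀ F ∈ L, F.sat J := by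
  induction L with
  | nil => simp [listConj, PF.sat]
  | cons F Fs ih => simp [listConj, PF.sat, ih]

theorem sat_listDisj_iff {L : List (PF A)} : (listDisj L).sat J ↔ ∃ F ∈ L, F.sat J := by
  induction L with
  | nil => simp [listDisj, PF.sat]
  | cons F Fs ih => simp [listDisj, PF.sat, ih]

theorem sat_reduct_listConj {L : List (PF A)} (hJ : ∀ F ∈ L, F.sat J)
    (hK : ∀ F ∈ L, (F.reduct J).sat K) : ((listConj L).reduct J).sat K := by
  induction L with
  | nil => exact PF.sat_reduct_imp_bot id
  | cons F Fs ih =>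
    simp only [List.forall_mem_cons] at hJ hK
    rw [listConj, PF.reduct_and_of_sat ⟨hJ.1, sat_listConj_iff.mpr hJ.2⟩]
    exact ⟨hK.1, ih hJ.2 hK.2⟩

end Constraints

namespace MVF

variable {σ V : Type} {I : σ → V}

theorem sat_reduct_self_iff (G : MVF σ V) : (G.reduct I).sat I ↔ G.sat I := by
  induction G with
  | bot => rfl
  | atom c v => by_cases h : I c = v <;> simp [reduct, sat, h]
  | and F G ihF ihG | or F G ihF ihG | imp F G ihF ihG =>
    rw [reduct]
    split_ifs with h
    · simp only [sat, ihF, ihG]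
    · exact iff_of_false id h

def atoms : MVF σ V → Set (σ × V)
  | .bot => ∅
  | .atom c v => {(c, v)}
  | .and F G | .or F G | .imp F G => F.atoms ∪ G.atoms

theorem eq_of_mem_atoms_reduct {G : MVF σ V} {c : σ} {v : V} (h : (c, v) ∈ (G.reduct I).atoms) :
    I c = v := by
  induction G with
  | bot => simp [reduct, atoms] at h
  | atom c' v' =>
    by_cases h' : I c' = v' <;> simp_all [reduct, atoms]
  | and F G ihF ihG | or F G ihF ihG | imp F G ihF ihG =>
    rw [reduct] at h
    split_ifs at h
    · exact h.elim ihF ihG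
    · simp [atoms] at h

variable [DecidableEq V] {Dom : σ → Finset V}

theorem sat_toProp_iff_of_atoms {K : PAtom Dom → Prop} {G : MVF σ V}
    (h : ∀ c v, (c, v) ∈ G.atoms → (((MVF.atom c v).toProp Dom).sat K ↔ I c = v)) :
    (G.toProp Dom).sat K ↔ G.sat I := by
  induction G with
  | bot => rfl
  | atom c v => exact h c v rfl
  | and F G ihF ihG | or F G ihF ihG | imp F G ihF ihG =>
    simp only [toProp, PF.sat, sat, ihF (fun c v hm => h c v (Or.inl hm)),
      ihG (fun c v hm => h c v (Or.inr hm))]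

theorem sat_toProp_toPropInterp_iff (hI : isInterp Dom I) (G : MVF σ V) :
    (G.toProp Dom).sat (toPropInterp Dom I) ↔ G.sat I :=
  sat_toProp_iff_of_atoms fun c v _ => by
    by_cases hv : v ∈ Dom c
    · simp [toProp, hv, PF.sat, toPropInterp]
    · simp only [toProp, hv, dite_false, PF.sat, false_iff]
      rintro rfl
      exact hv (hI c)

theorem sat_toProp_reduct_iff (hI : isInterp Dom I) {K : PAtom Dom → Prop} {I' : σ → V}
    (hK : ∀ c, K ⟨(c, I c), hI c⟩ ↔ I' c = I c) (G : MVF σ V) :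
    ((G.reduct I).toProp Dom).sat K ↔ (G.reduct I).sat I' :=
  sat_toProp_iff_of_atoms fun c v hm => by
    obtain rfl := eq_of_mem_atoms_reduct hm
    simpa [toProp, hI c, PF.sat] using hK c

theorem toProp_reduct (hI : isInterp Dom I) (G : MVF σ V) :
    (G.toProp Dom).reduct (toPropInterp Dom I) = (G.reduct I).toProp Dom := by
  induction G with
  | bot => rfl
  | atom c v =>
    by_cases hv : v ∈ Dom c
    · by_cases h : I c = v <;> simp [toProp, reduct, PF.reduct, hv, h, toPropInterp]
    · have h : I c ≠ v := fun h => hv (h ▸ hI c)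
      simp [toProp, reduct, PF.reduct, hv, h]
  | and F G ihF ihG | or F G ihF ihG | imp F G ihF ihG =>
    rw [toProp, reduct, PF.reduct]
    split_ifs with hJ hIG hIG
    · simp only [toProp, ihF, ihG]
    · exact (hIG ((sat_toProp_toPropInterp_iff hI _).mp hJ)).elim
    · exact (hJ ((sat_toProp_toPropInterp_iff hI _).mpr hIG)).elim
    · rfl

end MVF

section UEC

variable {σ V : Type} [DecidableEq V] {Dom : σ → Finset V} {J K : PAtom Dom → Prop}

theorem sat_UECc_iff {c : σ} :
    (UECc Dom c).sat J ↔ ∃ v ∈ Dom c, ∀ w (hw : w ∈ Dom c), J ⟨(c, w), hw⟩ ↔ w = v := by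
  simp only [UECc, PF.sat, PF.neg, sat_listConj_iff, sat_listDisj_iff, List.mem_flatMap,
    List.mem_filterMap, List.mem_map, Finset.mem_toList, Finset.mem_attach, true_and]
  constructor
  · rintro ⟨hpairs, hsome⟩
    obtain ⟨_, ⟨⟨v, hv⟩, rfl⟩, hJv⟩ := not_not.mp hsome
    refine ⟨v, hv, fun w hw => ⟨fun hJw => ?_, fun h => by subst h; exact hJv⟩⟩
    by_contra hne
    have hpair := hpairs _ ⟨⟨w, hw⟩, ⟨v, hv⟩, if_neg hne⟩
    exact hpair ⟨hJw, hJv⟩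
  · rintro ⟨v, hv, hJ⟩
    refine ⟨?_, fun h => h ⟨_, ⟨⟨v, hv⟩, rfl⟩, (hJ v hv).mpr rfl⟩⟩
    rintro _ ⟨⟨w, hw⟩, ⟨w', hw'⟩, hG⟩
    split_ifs at hG with hne
    cases hG
    rintro ⟨hJw, hJw'⟩
    exact hne (((hJ w hw).mp hJw).trans ((hJ w' hw').mp hJw').symm)

theorem sat_reduct_UECc {c : σ} (h : (UECc Dom c).sat J) : ((UECc Dom c).reduct J).sat K := by
  obtain ⟨hpairs, hsome⟩ := h
  rw [UECc, PF.reduct_and_of_sat ⟨hpairs, hsome⟩]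
  refine ⟨sat_reduct_listConj (sat_listConj_iff.mp hpairs) fun G hG => ?_,
    PF.sat_reduct_imp_bot hsome⟩
  have hGJ := sat_listConj_iff.mp hpairs G hG
  simp only [List.mem_flatMap, List.mem_filterMap] at hG
  obtain ⟨v, -, w, -, hG⟩ := hG
  split_ifs at hG
  cases hG
  exact PF.sat_reduct_imp_bot hGJ

variable [Fintype σ]

theorem sat_UECsig_iff : (UECsig Dom).sat J ↔ ∃ I, isInterp Dom I ∧ J = toPropInterp Dom I := by
  simp only [UECsig, sat_listConj_iff, List.forall_mem_map, Finset.mem_toList, Finset.mem_univ,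
    true_implies, sat_UECc_iff]
  constructor
  · intro h
    choose I hI hJ using h
    exact ⟨I, hI, funext fun ⟨(c, w), hw⟩ => propext ((hJ c w hw).trans eq_comm)⟩
  · rintro ⟨I, hI, rfl⟩ c
    exact ⟨I c, hI c, fun w _ => eq_comm⟩

theorem sat_reduct_UECsig (h : (UECsig Dom).sat J) : ((UECsig Dom).reduct J).sat K := by
  rw [UECsig] at h ⊢
  have hall := sat_listConj_iff.mp h
  refine sat_reduct_listConj hall fun G hG => ?_
  obtain ⟨c, -, rfl⟩ := List.mem_map.mp hG
  exact sat_reduct_UECc (hall _ hG)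

end UEC

section StableModels

variable {σ V : Type} [Fintype σ] [DecidableEq V] {Dom : σ → Finset V} {F : MVF σ V}
  {I : σ → V} {J K : PAtom Dom → Prop}

theorem sat_toProp_and_UECsig_iff :
    (PF.and (F.toProp Dom) (UECsig Dom)).sat J ↔
      ∃ I, isInterp Dom I ∧ F.sat I ∧ J = toPropInterp Dom I := by
  simp only [PF.sat, sat_UECsig_iff]
  constructor
  · rintro ⟨hF, I, hI, rfl⟩
    exact ⟨I, hI, (MVF.sat_toProp_toPropInterp_iff hI F).mp hF, rfl⟩
  · rintro ⟨I, hI, hF, rfl⟩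
    exact ⟨(MVF.sat_toProp_toPropInterp_iff hI F).mpr hF, I, hI, rfl⟩

theorem sat_reduct_toProp_and_UECsig_iff (hI : isInterp Dom I) (hF : F.sat I) :
    ((PF.and (F.toProp Dom) (UECsig Dom)).reduct (toPropInterp Dom I)).sat K ↔
      ((F.reduct I).toProp Dom).sat K := by
  have hsat := sat_toProp_and_UECsig_iff.mpr ⟨I, hI, hF, rfl⟩
  rw [PF.reduct_and_of_sat hsat, MVF.toProp_reduct hI]
  exact and_iff_left (sat_reduct_UECsig hsat.2)

theorem exists_isMVStable_of_isPStable (hJ : isPStable (PF.and (F.toProp Dom) (UECsig Dom)) J) :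
    ∃ I, isMVStable Dom F I ∧ J = toPropInterp Dom I := by
  obtain ⟨hJsat, hmin⟩ := hJ
  obtain ⟨I, hI, hFI, rfl⟩ := sat_toProp_and_UECsig_iff.mp ((PF.sat_reduct_self_iff _).mp hJsat)
  refine ⟨I, ⟨hI, (MVF.sat_reduct_self_iff F).mpr hFI, fun I' _ hI' => ?_⟩, rfl⟩
  let K : PAtom Dom → Prop := fun a => toPropInterp Dom I a ∧ toPropInterp Dom I' a
  have hK : ∀ c, K ⟨(c, I c), hI c⟩ ↔ I' c = I c := fun c => and_iff_right rfl
  have hKsat := (sat_reduct_toProp_and_UECsig_iff hI hFI).mpr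
    ((MVF.sat_toProp_reduct_iff hI hK F).mpr hI')
  funext c
  exact (((hmin K hKsat fun _ => And.left) ⟨(c, I c), hI c⟩).mp rfl).2

theorem isPStable_toPropInterp_of_isMVStable (hdom : ∀ c, 2 ≤ (Dom c).card) (hI : isMVStable Dom F I) :
    isPStable (PF.and (F.toProp Dom) (UECsig Dom)) (toPropInterp Dom I) := by
  classical
  obtain ⟨hI, hIsat, huniq⟩ := hI
  have hFI := (MVF.sat_reduct_self_iff F).mp hIsat
  refine ⟨(PF.sat_reduct_self_iff _).mpr (sat_toProp_and_UECsig_iff.mpr ⟨I, hI, hFI, rfl⟩),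
    fun K hK hKI => ?_⟩
  rw [sat_reduct_toProp_and_UECsig_iff hI hFI] at hK
  choose w hwDom hwne using fun c => Finset.exists_mem_ne (hdom c) (I c)
  let I' : σ → V := fun c => if K ⟨(c, I c), hI c⟩ then I c else w c
  have hI'K : ∀ c, K ⟨(c, I c), hI c⟩ ↔ I' c = I c := fun c => by
    by_cases h : K ⟨(c, I c), hI c⟩ <;> simp [I', h, hwne]
  have hI' : isInterp Dom I' := fun c => by
    dsimp only [I']
    split_ifs
    exacts [hI c, hwDom c]
  have hI'I : I' = I := huniq I' hI' ((MVF.sat_toProp_reduct_iff hI hI'K F).mp hK)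
  rintro ⟨⟨c, v⟩, hv⟩
  constructor
  · intro hIc
    obtain rfl : I c = v := hIc
    exact (hI'K c).mpr (congrFun hI'I c)
  · exact hKI _

end StableModels

theorem theorem1_part_II_general {σ V : Type} [Fintype σ] [DecidableEq V]
    (Dom : σ → Finset V) (hdom : ∀ c : σ, 2 ≤ (Dom c).card)
    (F : MVF σ V)
    (J : PAtom Dom → Prop) :
    isPStable (PF.and (F.toProp Dom) (UECsig Dom)) J ↔
      ∃ I : σ → V, isMVStable Dom F I ∧ J = toPropInterp Dom I := by
  refine ⟨exists_isMVStable_of_isPStable, ?_⟩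
  rintro ⟨I, hI, rfl⟩
  exact isPStable_toPropInterp_of_isMVStable hdom hI

/-- **Theorem 1, Part (II)**: Let `F` be a multi-valued propositional formula of a
signature `σ` such that every constant's domain has at least two elements. A
propositional interpretation `J` of `σ^prop` is a propositional stable model of
`F^prop ∧ UEC_σ` iff `J = I^prop` for some multi-valued stable model `I` of `F`. -/
theorem theorem1_part_II {σ V : Type} [Fintype σ] [DecidableEq V]
    (Dom : σ → Finset V) (hdom : ∀ c : σ, 2 ≤ (Dom c).card)
    (F : MVF σ V) (hF : F.wf Dom)
    (J : PAtom Dom → Prop) :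
    isPStable (PF.and (F.toProp Dom) (UECsig Dom)) J ↔
      ∃ I : σ → V, isMVStable Dom F I ∧ J = toPropInterp Dom I :=
  theorem1_part_II_general Dom hdom F J
end

section
/- The reduct commutes with the propositional translation: for any multi-valued propositional formula F of a signature σ and any multi-valued interpretation I of σ, the propositional translation of the reduct equals the reduct of the propositional translation, i.e., (F^I)^prop = (F^prop)^{I^prop}. -/
theorem sat_toProp_aux {σ V : Type} [DecidableEq V]
    (Dom : σ → Finset V) (F : MVF σ V) (hF : F.wf Dom) (I : σ → V) :
    F.sat I ↔ (F.toProp Dom).sat (toPropInterp Dom I) := by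
  induction F with
  | bot => simp [MVF.sat, MVF.toProp, PF.sat]
  | atom c v =>
    simp only [MVF.wf] at hF
    simp [MVF.sat, MVF.toProp, hF, PF.sat, toPropInterp]
  | and F G ihF ihG =>
    simp [MVF.sat, MVF.toProp, PF.sat, ihF hF.1, ihG hF.2]
  | or F G ihF ihG =>
    simp [MVF.sat, MVF.toProp, PF.sat, ihF hF.1, ihG hF.2]
  | imp F G ihF ihG =>
    simp [MVF.sat, MVF.toProp, PF.sat, ihF hF.1, ihG hF.2]

/-- The reduct commutes with the propositional translation: for any multi-valued
propositional formula `F` of a signature and any multi-valued interpretation `I`,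
`(F^I)^prop = (F^prop)^(I^prop)`. -/
theorem reduct_commutes_toProp {σ V : Type} [DecidableEq V]
    (Dom : σ → Finset V) (F : MVF σ V) (hF : F.wf Dom)
    (I : σ → V) (hI : isInterp Dom I) :
    (F.reduct I).toProp Dom = (F.toProp Dom).reduct (toPropInterp Dom I) := by
  induction F with
  | bot => simp [MVF.reduct, MVF.toProp, PF.reduct]
  | atom c v =>
    simp only [MVF.wf] at hF
    simp only [MVF.reduct, MVF.toProp, PF.reduct]
    by_cases h : I c = v
    · simp [h, hF, PF.reduct, PF.sat, toPropInterp, MVF.toProp]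
    · simp [h, hF, PF.reduct, PF.sat, toPropInterp, MVF.toProp]
  | and F G ihF ihG =>
    have hs := sat_toProp_aux Dom (MVF.and F G) hF I
    simp only [MVF.toProp] at hs
    simp only [MVF.reduct, MVF.toProp, PF.reduct]
    by_cases h : (MVF.and F G).sat I
    · rw [if_pos h, if_pos (hs.mp h)]
      simp [MVF.toProp, ihF hF.1, ihG hF.2]
    · rw [if_neg h, if_neg (fun hc => h (hs.mpr hc))]; rfl
  | or F G ihF ihG =>
    have hs := sat_toProp_aux Dom (MVF.or F G) hF I
    simp only [MVF.toProp] at hs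
    simp only [MVF.reduct, MVF.toProp, PF.reduct]
    by_cases h : (MVF.or F G).sat I
    · rw [if_pos h, if_pos (hs.mp h)]
      simp [MVF.toProp, ihF hF.1, ihG hF.2]
    · rw [if_neg h, if_neg (fun hc => h (hs.mpr hc))]; rfl
  | imp F G ihF ihG =>
    have hs := sat_toProp_aux Dom (MVF.imp F G) hF I
    simp only [MVF.toProp] at hs
    simp only [MVF.reduct, MVF.toProp, PF.reduct]
    by_cases h : (MVF.imp F G).sat I
    · rw [if_pos h, if_pos (hs.mp h)]
      simp [MVF.toProp, ihF hF.1, ihG hF.2]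
    · rw [if_neg h, if_neg (fun hc => h (hs.mpr hc))]; rfl
end

section
/- Flattening of the incremental translation: for any definite C+ action description D, any query formula F(t), and any nonnegative integer k, the union of the program components B ∪ P[1] ∪ ⋯ ∪ P[k] ∪ Q[k] of the incremental logic program associated with D and F(t) is equal, as a set of propositional formulas, to the set consisting of (i) the propositional translations R^prop of all rules R of cplus2mvpf(D,k), (ii) the existence and uniqueness constraints UEC(i:c) for all time-stamped constants i:c of the signature of cplus2mvpf(D,k), and (iii) the constraint ⊥ ← ¬(F(k))^prop. -/
/-! Action language C+ : signatures, causal laws, the translation `cplus2mvpf`,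
and the incremental program components B, P[t], Q[t]. -/

/-- The kinds of constants of a C+ signature: fluent constants are partitioned
into simple and statically determined ones; the remaining constants are action
constants. -/
inductive ConstKind : Type where
  | simpleFluent : ConstKind
  | statDetFluent : ConstKind
  | action : ConstKind
  deriving DecidableEq

/-- Whether a kind of constant is a fluent constant. -/
def ConstKind.isFluent : ConstKind → Bool
  | .simpleFluent => true
  | .statDetFluent => true
  | .action => false

/-- A C+ signature: a multi-valued signature (constants `σ` with nonempty finite
domains) partitioned into simple fluent, statically determined fluent, and action
constants. -/
structure CPlusSig (σ V : Type) where
  kind : σ → ConstKind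
  Dom : σ → Finset V
  dom_nonempty : ∀ c, (Dom c).Nonempty

variable {σ V : Type}

/-- A fluent formula: all constants occurring in it are fluent constants. -/
def isFluentFormula (S : CPlusSig σ V) (F : MVF σ V) : Prop :=
  ∀ c ∈ F.consts, (S.kind c).isFluent = true

/-- An action formula: it contains at least one action constant and no fluent
constants. -/
def isActionFormula (S : CPlusSig σ V) (F : MVF σ V) : Prop :=
  (∃ c ∈ F.consts, S.kind c = .action) ∧ ∀ c ∈ F.consts, S.kind c = .action

/-- Causal laws: static laws `caused F if G`, action dynamic laws `caused F if G`,
and fluent dynamic laws `caused F if G after H`. -/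
inductive CausalLaw (σ V : Type) : Type where
  | static : MVF σ V → MVF σ V → CausalLaw σ V
  | actionDyn : MVF σ V → MVF σ V → CausalLaw σ V
  | fluentDyn : MVF σ V → MVF σ V → MVF σ V → CausalLaw σ V
  deriving DecidableEq

/-- Well-formedness of a causal law with respect to a C+ signature: in a static law
`caused F if G`, `F` and `G` are fluent formulas; in an action dynamic law
`caused F if G`, `F` is an action formula and `G` is any formula; in a fluent
dynamic law `caused F if G after H`, `F` and `G` are fluent formulas, `F` contains
no statically determined constants, and `H` is any formula. -/
def CausalLaw.wf (S : CPlusSig σ V) : CausalLaw σ V → Prop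
  | .static F G => F.wf S.Dom ∧ G.wf S.Dom ∧ isFluentFormula S F ∧ isFluentFormula S G
  | .actionDyn F G => F.wf S.Dom ∧ G.wf S.Dom ∧ isActionFormula S F
  | .fluentDyn F G H => F.wf S.Dom ∧ G.wf S.Dom ∧ H.wf S.Dom ∧
      isFluentFormula S F ∧ isFluentFormula S G ∧
      ∀ c ∈ F.consts, S.kind c ≠ .statDetFluent

/-- The head `F` of a causal law. -/
def CausalLaw.head : CausalLaw σ V → MVF σ V
  | .static F _ => F
  | .actionDyn F _ => F
  | .fluentDyn F _ _ => F

/-- A formula is an atom or `⊥`. -/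
def MVF.isAtomOrBot : MVF σ V → Prop
  | .bot => True
  | .atom _ _ => True
  | _ => False

/-- An action description (a finite set of causal laws) is definite if the head of
every law is an atom or `⊥`. -/
def definite [DecidableEq σ] [DecidableEq V] (D : Finset (CausalLaw σ V)) : Prop :=
  ∀ l ∈ D, l.head.isAtomOrBot

/-- The valid time-stamped constants `i:c` of the signature of `cplus2mvpf(D,m)`:
`i ∈ {0,…,m}` for fluent constants and `i ∈ {0,…,m−1}` for action constants. -/
def validTC (S : CPlusSig σ V) (m : ℕ) (p : ℕ × σ) : Prop :=
  ((S.kind p.2).isFluent = true ∧ p.1 ≤ m) ∨ (S.kind p.2 = .action ∧ p.1 + 1 ≤ m)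

instance (S : CPlusSig σ V) (m : ℕ) (p : ℕ × σ) : Decidable (validTC S m p) := by
  unfold validTC; infer_instance

/-- The time-stamped constants of the signature of `cplus2mvpf(D,m)`. -/
abbrev TSC (S : CPlusSig σ V) (m : ℕ) : Type := {p : ℕ × σ // validTC S m p}

/-- The domain of a time-stamped constant `i:c` is the domain of `c`. -/
def tcDom (S : CPlusSig σ V) (m : ℕ) : TSC S m → Finset V := fun p => S.Dom p.1.2

/-- Replace every atom of a formula by a formula. -/
def MVF.mapAtoms {σ' : Type} (f : σ → V → MVF σ' V) : MVF σ V → MVF σ' V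
  | .bot => .bot
  | .atom c v => f c v
  | .and F G => .and (F.mapAtoms f) (G.mapAtoms f)
  | .or F G => .or (F.mapAtoms f) (G.mapAtoms f)
  | .imp F G => .imp (F.mapAtoms f) (G.mapAtoms f)

/-- `i:F`: insert `i:` in front of every occurrence of every constant in `F`. -/
def stamp (S : CPlusSig σ V) (m i : ℕ) (F : MVF σ V) : MVF (TSC S m) V :=
  F.mapAtoms fun c v => if h : validTC S m (i, c) then .atom ⟨(i, c), h⟩ v else .bot

/-- The multi-valued propositional theory `cplus2mvpf(D,m)`: the rules
`i:F ← ¬¬(i:G)` for every static law and `i ∈ {0,…,m}` and for every action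
dynamic law and `i ∈ {0,…,m−1}`; `i:F ← ¬¬(i:G) ∧ (i−1:H)` for every fluent
dynamic law and `i ∈ {1,…,m}`; and `0:c=v ← ¬¬(0:c=v)` for every simple fluent
constant `c` and every `v ∈ Dom(c)`. -/
def cplus2mvpf [DecidableEq σ] [DecidableEq V]
    (S : CPlusSig σ V) (D : Finset (CausalLaw σ V)) (m : ℕ) : Set (MVF (TSC S m) V) :=
  { R | (∃ F G, CausalLaw.static F G ∈ D ∧ ∃ i ≤ m,
           R = .imp ((stamp S m i G).neg.neg) (stamp S m i F))
      ∨ (∃ F G, CausalLaw.actionDyn F G ∈ D ∧ ∃ i, i + 1 ≤ m ∧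
           R = .imp ((stamp S m i G).neg.neg) (stamp S m i F))
      ∨ (∃ F G H, CausalLaw.fluentDyn F G H ∈ D ∧ ∃ i, 1 ≤ i ∧ i ≤ m ∧
           R = .imp (.and ((stamp S m i G).neg.neg) (stamp S m (i - 1) H)) (stamp S m i F))
      ∨ (∃ c, S.kind c = .simpleFluent ∧ ∃ v ∈ S.Dom c,
           R = .imp ((stamp S m 0 (.atom c v)).neg.neg) (stamp S m 0 (.atom c v))) }

/-- The base component `B` of the incremental logic program: `0:UEC(f)` for every
fluent constant `f`; `0:c(v) ← ¬¬(0:c(v))` for every simple fluent `c` and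
`v ∈ Dom(c)`; and `0:F^prop ← ¬¬(0:G^prop)` for every static law of `D`. -/
def Bcomp [DecidableEq σ] [DecidableEq V]
    (S : CPlusSig σ V) (D : Finset (CausalLaw σ V)) (m : ℕ) :
    Set (PF (PAtom (tcDom S m))) :=
  { R | (∃ tc : TSC S m, tc.1.1 = 0 ∧ (S.kind tc.1.2).isFluent = true ∧
           R = UECc (tcDom S m) tc)
      ∨ (∃ c, S.kind c = .simpleFluent ∧ ∃ v ∈ S.Dom c,
           R = .imp (((stamp S m 0 (.atom c v)).toProp (tcDom S m)).neg.neg)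
                    ((stamp S m 0 (.atom c v)).toProp (tcDom S m)))
      ∨ (∃ F G, CausalLaw.static F G ∈ D ∧
           R = .imp (((stamp S m 0 G).toProp (tcDom S m)).neg.neg)
                    ((stamp S m 0 F).toProp (tcDom S m))) }

/-- The cumulative component `P[t]` (for `t ≥ 1`): `t:UEC(f)` for every fluent
constant `f`; `(t−1):UEC(a)` for every action constant `a`;
`t:F^prop ← ¬¬(t:G^prop)` for every static law;
`(t−1):F^prop ← ¬¬((t−1):G^prop)` for every action dynamic law; and
`t:F^prop ← ¬¬(t:G^prop) ∧ ((t−1):H^prop)` for every fluent dynamic law of `D`. -/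
def Pcomp [DecidableEq σ] [DecidableEq V]
    (S : CPlusSig σ V) (D : Finset (CausalLaw σ V)) (m t : ℕ) :
    Set (PF (PAtom (tcDom S m))) :=
  { R | (∃ tc : TSC S m, tc.1.1 = t ∧ (S.kind tc.1.2).isFluent = true ∧
           R = UECc (tcDom S m) tc)
      ∨ (∃ tc : TSC S m, tc.1.1 = t - 1 ∧ S.kind tc.1.2 = .action ∧
           R = UECc (tcDom S m) tc)
      ∨ (∃ F G, CausalLaw.static F G ∈ D ∧
           R = .imp (((stamp S m t G).toProp (tcDom S m)).neg.neg)
                    ((stamp S m t F).toProp (tcDom S m)))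
      ∨ (∃ F G, CausalLaw.actionDyn F G ∈ D ∧
           R = .imp (((stamp S m (t - 1) G).toProp (tcDom S m)).neg.neg)
                    ((stamp S m (t - 1) F).toProp (tcDom S m)))
      ∨ (∃ F G H, CausalLaw.fluentDyn F G H ∈ D ∧
           R = .imp (.and (((stamp S m t G).toProp (tcDom S m)).neg.neg)
                          ((stamp S m (t - 1) H).toProp (tcDom S m)))
                    ((stamp S m t F).toProp (tcDom S m))) }

/-- The volatile query component `Q[t]` for a query `F`: the single constraint
`⊥ ← ¬(F)^prop`. -/
def Qcomp [DecidableEq V] (S : CPlusSig σ V) (m : ℕ) (Fq : MVF (TSC S m) V) :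
    Set (PF (PAtom (tcDom S m))) :=
  {PF.imp ((Fq.toProp (tcDom S m)).neg) PF.bot}

/-- **Flattening of the incremental translation**: for any definite C+ action
description `D`, any query formula `F(t)`, and any nonnegative integer `k`, the
union `B ∪ P[1] ∪ ⋯ ∪ P[k] ∪ Q[k]` of the components of the incremental logic
program associated with `D` and `F(t)` equals, as a set of propositional
formulas, the set consisting of (i) the propositional translations `R^prop` of
all rules `R` of `cplus2mvpf(D,k)`, (ii) the existence and uniqueness
constraints `UEC(i:c)` for all time-stamped constants `i:c` of the signature of
`cplus2mvpf(D,k)`, and (iii) the constraint `⊥ ← ¬(F(k))^prop`. -/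
theorem incremental_translation_flattening {σ V : Type} [DecidableEq σ] [DecidableEq V]
    (S : CPlusSig σ V) (D : Finset (CausalLaw σ V))
    (hwf : ∀ l ∈ D, l.wf S) (hdef : definite D)
    (k : ℕ) (Fq : MVF (TSC S k) V) (hFq : Fq.wf (tcDom S k)) :
    Bcomp S D k ∪ (⋃ t ∈ Finset.Icc 1 k, Pcomp S D k t) ∪ Qcomp S k Fq
      = (MVF.toProp (tcDom S k) '' cplus2mvpf S D k)
        ∪ Set.range (UECc (tcDom S k))
        ∪ {PF.imp ((Fq.toProp (tcDom S k)).neg) PF.bot} := by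
  classical
  ext R
  simp only [Set.mem_union, Set.mem_iUnion, Set.mem_image, Set.mem_range,
    Set.mem_singleton_iff, Qcomp, Bcomp, Pcomp, cplus2mvpf, Set.mem_setOf_eq,
    Finset.mem_Icc, exists_prop]
  constructor
  · rintro ((hB | hP) | hQ)
    · rcases hB with ⟨tc, h0, hfl, rfl⟩ | ⟨c, hc, v, hv, rfl⟩ | ⟨F, G, hD, rfl⟩
      · exact Or.inl (Or.inr ⟨tc, rfl⟩)
      · exact Or.inl (Or.inl ⟨_, Or.inr (Or.inr (Or.inr ⟨c, hc, v, hv, rfl⟩)), rfl⟩)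
      · exact Or.inl (Or.inl ⟨_, Or.inl ⟨F, G, hD, 0, Nat.zero_le k, rfl⟩, rfl⟩)
    · rcases hP with ⟨t, ⟨ht1, htk⟩, hP⟩
      rcases hP with ⟨tc, hts, hfl, rfl⟩ | ⟨tc, hts, hac, rfl⟩ | ⟨F, G, hD, rfl⟩ |
        ⟨F, G, hD, rfl⟩ | ⟨F, G, H, hD, rfl⟩
      · exact Or.inl (Or.inr ⟨tc, rfl⟩)
      · exact Or.inl (Or.inr ⟨tc, rfl⟩)
      · exact Or.inl (Or.inl ⟨_, Or.inl ⟨F, G, hD, t, htk, rfl⟩, rfl⟩)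
      · refine Or.inl (Or.inl ⟨_, Or.inr (Or.inl ⟨F, G, hD, t - 1, ?_, rfl⟩), rfl⟩)
        omega
      · exact Or.inl (Or.inl ⟨_, Or.inr (Or.inr (Or.inl ⟨F, G, H, hD, t, ht1, htk, rfl⟩)),
          rfl⟩)
    · exact Or.inr hQ
  · rintro ((⟨R0, hR0, rfl⟩ | ⟨tc, rfl⟩) | hQ)
    · rcases hR0 with ⟨F, G, hD, i, hik, rfl⟩ | ⟨F, G, hD, i, hik, rfl⟩ |
        ⟨F, G, H, hD, i, hi1, hik, rfl⟩ | ⟨c, hc, v, hv, rfl⟩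
      · rcases Nat.eq_zero_or_pos i with h0 | h1
        · subst h0
          exact Or.inl (Or.inl (Or.inr (Or.inr ⟨F, G, hD, rfl⟩)))
        · exact Or.inl (Or.inr ⟨i, ⟨h1, hik⟩, Or.inr (Or.inr (Or.inl ⟨F, G, hD, rfl⟩))⟩)
      · refine Or.inl (Or.inr ⟨i + 1, ⟨Nat.le_add_left 1 i, hik⟩,
          Or.inr (Or.inr (Or.inr (Or.inl ⟨F, G, hD, ?_⟩)))⟩)
        simp only [Nat.add_sub_cancel]
        rfl
      · exact Or.inl (Or.inr ⟨i, ⟨hi1, hik⟩,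
          Or.inr (Or.inr (Or.inr (Or.inr ⟨F, G, H, hD, rfl⟩)))⟩)
      · exact Or.inl (Or.inl (Or.inr (Or.inl ⟨c, hc, v, hv, rfl⟩)))
    · rcases tc with ⟨⟨i, c⟩, hv⟩
      rcases hv with ⟨hfl, hik⟩ | ⟨hac, hik⟩
      · rcases Nat.eq_zero_or_pos i with h0 | h1
        · subst h0
          exact Or.inl (Or.inl (Or.inl ⟨⟨(0, c), Or.inl ⟨hfl, hik⟩⟩, rfl, hfl, rfl⟩))
        · exact Or.inl (Or.inr ⟨i, ⟨h1, hik⟩,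
            Or.inl ⟨⟨(i, c), Or.inl ⟨hfl, hik⟩⟩, rfl, hfl, rfl⟩⟩)
      · refine Or.inl (Or.inr ⟨i + 1, ⟨Nat.le_add_left 1 i, hik⟩,
          Or.inr (Or.inl ⟨⟨(i, c), Or.inr ⟨hac, hik⟩⟩, ?_, hac, rfl⟩)⟩)
        simp
    · exact Or.inr hQ
end
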